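/- With Φ₁ = ā/(a·ā + b·b̄) and Φ₂ = -b/(a·ā + b·b̄) the constituents of p⁻¹, the full quaternionic derivative (∂ₐΦ₁ + ∂_āΦ₁) + (∂ₐΦ₂ + ∂_āΦ₂)·j equals -conj(p)²/|p|⁴ = -p⁻² for p ≠ 0, where a, ā, b, b̄ are evaluated at the actual components of p. -/

import Mathlib

open Quaternion

noncomputable section

/-- Embedding of a complex number `x + y i` into the real quaternions. -/
def Cq (z : ℂ) : ℍ[ℝ] := ⟨z.re, z.im, 0, 0⟩

/-- The quaternion unit `i`. -/
def qi : ℍ[ℝ] := ⟨0, 1, 0, 0⟩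

/-- The quaternion unit `j`. -/
def qj : ℍ[ℝ] := ⟨0, 0, 1, 0⟩

/-- The quaternion unit `k`. -/
def qk : ℍ[ℝ] := ⟨0, 0, 0, 1⟩

/-!
Writing `p = a + b j`, everything is explicit. The formal `a`- and `ā`-derivatives of `Φ₁` add
up to `(b b̄ - ā²) / |p|⁴` and those of `Φ₂` to `(a + ā) b / |p|⁴`. By the Cayley–Dickson product
rule `(a + b j)(c + d j) = (a c - b d̄) + (a d + b c̄) j` and `p̄ = ā - b j`, these are exactly the
components of `-p̄² / |p|⁴`, and `p⁻¹ = p̄ / |p|²` gives `-p̄² / |p|⁴ = -p⁻²`.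
-/

open ComplexConjugate

section

variable {𝕜 : Type*} [NontriviallyNormedField 𝕜]

theorem deriv_const_div_mul_add {c u v x : 𝕜} (h : x * u + v ≠ 0) :
    deriv (fun t => c / (t * u + v)) x = -(c * u) / (x * u + v) ^ 2 := by
  simpa using ((hasDerivAt_const x c).fun_div (((hasDerivAt_id x).mul_const u).add_const v) h).deriv

theorem deriv_const_div_const_mul_add {c u v x : 𝕜} (h : u * x + v ≠ 0) :
    deriv (fun t => c / (u * t + v)) x = -(c * u) / (u * x + v) ^ 2 := by
  simpa using ((hasDerivAt_const x c).fun_div (((hasDerivAt_id x).const_mul u).add_const v) h).deriv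

theorem deriv_div_const_mul_add {u v x : 𝕜} (h : u * x + v ≠ 0) :
    deriv (fun t => t / (u * t + v)) x = v / (u * x + v) ^ 2 := by
  rw [((hasDerivAt_id' x).fun_div (((hasDerivAt_id' x).const_mul u).add_const v) h).deriv]
  ring

end

theorem Quaternion.star_pow_div_normSq_pow {R : Type*} [Field R] [LinearOrder R]
    [IsStrictOrderedRing R] (q : ℍ[R]) (n : ℕ) :
    star q ^ n / ((normSq q : R) : ℍ[R]) ^ n = q⁻¹ ^ n := by
  rw [inv_def, smul_pow, ← coe_pow, div_eq_mul_inv, ← coe_inv, mul_coe_eq_smul, inv_pow]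

def cayleyDickson (a b : ℂ) : ℍ[ℝ] := Cq a + Cq b * qj

section CayleyDickson

variable (a b c d : ℂ)

@[simp] theorem cayleyDickson_re : (cayleyDickson a b).re = a.re := by
  simp only [cayleyDickson, re_add, re_mul]; simp [Cq, qj]

@[simp] theorem cayleyDickson_imI : (cayleyDickson a b).imI = a.im := by
  simp only [cayleyDickson, imI_add, imI_mul]; simp [Cq, qj]

@[simp] theorem cayleyDickson_imJ : (cayleyDickson a b).imJ = b.re := by
  simp only [cayleyDickson, imJ_add, imJ_mul]; simp [Cq, qj]

@[simp] theorem cayleyDickson_imK : (cayleyDickson a b).imK = b.im := by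
  simp only [cayleyDickson, imK_add, imK_mul]; simp [Cq, qj]

theorem neg_cayleyDickson : -cayleyDickson a b = cayleyDickson (-a) (-b) := by
  ext <;> simp

theorem star_cayleyDickson : star (cayleyDickson a b) = cayleyDickson (conj a) (-b) := by
  ext <;> simp

theorem cayleyDickson_mul_cayleyDickson :
    cayleyDickson a b * cayleyDickson c d
      = cayleyDickson (a * c - b * conj d) (a * d + b * conj c) := by
  ext <;> simp <;> ring

theorem cayleyDickson_div_coe (r : ℝ) :
    cayleyDickson a b / (r : ℍ[ℝ]) = cayleyDickson (a / r) (b / r) := by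
  rw [div_eq_mul_inv, ← coe_inv, mul_coe_eq_smul]
  ext <;> simp only [re_smul, imI_smul, imJ_smul, imK_smul, cayleyDickson_re, cayleyDickson_imI,
    cayleyDickson_imJ, cayleyDickson_imK, Complex.div_ofReal_re, Complex.div_ofReal_im,
    smul_eq_mul, inv_mul_eq_div]

theorem coe_normSq_cayleyDickson :
    ((normSq (cayleyDickson a b) : ℝ) : ℂ) = a * conj a + b * conj b := by
  rw [normSq_def', Complex.mul_conj, Complex.mul_conj]
  simp only [cayleyDickson_re, cayleyDickson_imI, cayleyDickson_imJ, cayleyDickson_imK]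
  push_cast [Complex.normSq_apply]; ring

theorem neg_star_cayleyDickson_sq :
    -star (cayleyDickson a b) ^ 2 = cayleyDickson (b * conj b - conj a ^ 2) ((a + conj a) * b) := by
  rw [star_cayleyDickson, sq, cayleyDickson_mul_cayleyDickson, neg_cayleyDickson]
  congr 1 <;> simp only [map_neg, Complex.conj_conj] <;> ring

end CayleyDickson

/-- The full quaternionic derivative of `p⁻¹`:
`(∂ₐΦ₁ + ∂_āΦ₁) + (∂ₐΦ₂ + ∂_āΦ₂)·j = -conj(p)²/|p|⁴ = -p⁻²`, where
`Φ₁ = ā/(a·ā + b·b̄)`, `Φ₂ = -b/(a·ā + b·b̄)` and the formal partial derivatives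
in the four independent variables are evaluated at `(a, conj a, b, conj b)`. -/
theorem full_derivative_p_inv (a b : ℂ) (p : ℍ[ℝ]) (hab : p = Cq a + Cq b * qj)
    (hp : p ≠ 0) :
    Cq (deriv (fun t : ℂ => (starRingEnd ℂ) a / (t * (starRingEnd ℂ) a + b * (starRingEnd ℂ) b)) a
          + deriv (fun t : ℂ => t / (a * t + b * (starRingEnd ℂ) b)) ((starRingEnd ℂ) a))
      + Cq (deriv (fun t : ℂ => -b / (t * (starRingEnd ℂ) a + b * (starRingEnd ℂ) b)) a
          + deriv (fun t : ℂ => -b / (a * t + b * (starRingEnd ℂ) b)) ((starRingEnd ℂ) a)) * qj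
      = -(star p) ^ 2 / ((Quaternion.normSq p : ℝ) : ℍ[ℝ]) ^ 2 ∧
    -(star p) ^ 2 / ((Quaternion.normSq p : ℝ) : ℍ[ℝ]) ^ 2 = -(p⁻¹) ^ 2 := by
  obtain rfl : p = cayleyDickson a b := hab
  have hD : a * conj a + b * conj b ≠ 0 := by
    rw [← coe_normSq_cayleyDickson]; exact_mod_cast normSq_ne_zero.2 hp
  refine ⟨?_, by rw [neg_div, star_pow_div_normSq_pow]⟩
  rw [deriv_const_div_mul_add hD, deriv_div_const_mul_add hD, deriv_const_div_mul_add hD,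
    deriv_const_div_const_mul_add hD, neg_star_cayleyDickson_sq, ← coe_pow, cayleyDickson_div_coe]
  push_cast [coe_normSq_cayleyDickson]
  change cayleyDickson _ _ = cayleyDickson _ _
  congr 1 <;> ring
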